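/- arXiv:1604.04904 — 2 statements merged into one kernel-verified Lean document; each statement's English description precedes it below -/
import Mathlib

section
/- Let h and k be coprime positive integers with h + k odd. Then (k-1)·B₁(h,k) + (h-1)·B₁(k,h) = -(1/2)·(k-1)·(h-1). -/
/-- The sawtooth function `((x))`: equals `x - ⌊x⌋ - 1/2` if `x` is not an integer,
and `0` if `x` is an integer. -/
def saw (x : ℚ) : ℚ := if x = (⌊x⌋ : ℚ) then 0 else x - ⌊x⌋ - 1/2

/-- `B₁(h,k) = Σ_{j=1}^{k-1} (-1)^{j+⌊hj/k⌋}·⌊hj/k⌋`. -/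
noncomputable def B1 (h k : ℤ) : ℚ :=
  ∑ j ∈ Finset.Icc (1 : ℤ) (k - 1),
    (-1 : ℚ) ^ (j + ⌊((h * j : ℤ) : ℚ) / (k : ℚ)⌋) * (⌊((h * j : ℤ) : ℚ) / (k : ℚ)⌋ : ℚ)

/-! Reflecting `j ↦ k - j` turns `⌊hj/k⌋` into `h - 1 - ⌊hj/k⌋` and, as `h + k` is odd,
keeps the sign `(-1)^(j + ⌊hj/k⌋)`; averaging gives `2 B₁(h,k) = (h - 1) T(h,k)` with
`T(h,k) = Σ_j (-1)^(j + ⌊hj/k⌋)` (`altSum h k`). Next, `j + ⌊hj/k⌋` is the rank of `hj` among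
the `h + k - 2` positive multiples of `h` or of `k` below `hk`, so `T(h,k) + T(k,h)` is the
alternating sum `Σ_{i=1}^{h+k-2} (-1)^i = -1`. -/

open Finset

theorem Finset.sum_comp_card_filter_le {α M : Type*} [LinearOrder α] [AddCommMonoid M]
    (s : Finset α) (f : ℕ → M) :
    ∑ m ∈ s, f #{n ∈ s | n ≤ m} = ∑ i ∈ range #s, f (i + 1) := by
  induction s using Finset.induction_on_max with
  | empty => simp
  | insert a s hlt ih =>
    have ha : a ∉ s := fun h => lt_irrefl a (hlt a h)
    have hrank_a : #{n ∈ insert a s | n ≤ a} = #s + 1 := by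
      rw [filter_true_of_mem fun n hn => ?_, card_insert_of_notMem ha]
      rcases mem_insert.mp hn with rfl | hn
      exacts [le_rfl, (hlt n hn).le]
    have hrank_s : ∀ m ∈ s, #{n ∈ insert a s | n ≤ m} = #{n ∈ s | n ≤ m} := fun m hm => by
      rw [filter_insert, if_neg (hlt m hm).not_ge]
    rw [sum_insert ha, card_insert_of_notMem ha, sum_range_succ, hrank_a, sum_congr rfl
      fun m hm => congrArg f (hrank_s m hm), ih, add_comm]

theorem Int.sum_Icc_reflect {M : Type*} [AddCommMonoid M] (f : ℤ → M) (a b : ℤ) :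
    ∑ j ∈ Icc a b, f (a + b - j) = ∑ j ∈ Icc a b, f j :=
  sum_nbij' (a + b - ·) (a + b - ·) (fun j hj => by simp only [mem_Icc] at hj ⊢; omega)
    (fun j hj => by simp only [mem_Icc] at hj ⊢; omega) (fun j _ => by ring) (fun j _ => by ring)
    fun _ _ => rfl

theorem Int.floor_intCast_div_intCast {α : Type*} [Field α] [LinearOrder α] [IsStrictOrderedRing α]
    [FloorRing α] (a : ℤ) {b : ℤ} (hb : 0 ≤ b) : ⌊(a : α) / b⌋ = a / b := by
  lift b to ℕ using hb
  rw [← Rat.floor_intCast_div_natCast, ← Rat.floor_cast (α := α)]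
  norm_cast

theorem Int.mul_sub_ediv_of_not_dvd {h j k : ℤ} (hk : 0 < k) (hdvd : ¬ k ∣ h * j) :
    h * (k - j) / k = h - 1 - h * j / k := by
  rw [show h * (k - j) = -(h * j) + h * k by ring, Int.add_mul_ediv_right _ _ hk.ne',
    Int.neg_ediv, if_neg hdvd, Int.sign_eq_one_of_pos hk]
  ring

theorem neg_one_zpow_eq_of_even_sub {R : Type*} [DivisionRing R] {a b : ℤ} (hab : Even (a - b)) :
    (-1 : R) ^ a = (-1 : R) ^ b := by
  rw [← sub_add_cancel a b, zpow_add₀ (by norm_num), hab.neg_one_zpow, one_mul]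

theorem Int.card_filter_le_image_mul_Icc {a n x : ℤ} (ha : 0 < a) (hx : 0 ≤ x) (hxn : x / a ≤ n) :
    (#{m ∈ (Icc 1 n).image (a * ·) | m ≤ x} : ℤ) = x / a := by
  have hfilter : {i ∈ Icc 1 n | a * i ≤ x} = Icc 1 (x / a) := by
    ext i
    simp only [mem_filter, mem_Icc, Int.le_ediv_iff_mul_le ha, mul_comm i]
    constructor
    · rintro ⟨⟨hi, -⟩, hix⟩; exact ⟨hi, hix⟩
    · rintro ⟨hi, hix⟩
      refine ⟨⟨hi, le_trans ?_ hxn⟩, hix⟩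
      rwa [Int.le_ediv_iff_mul_le ha, mul_comm]
  rw [filter_image, hfilter, card_image_of_injective _ (mul_right_injective₀ ha.ne'),
    Int.card_Icc, add_sub_cancel_right, Int.toNat_of_nonneg (Int.ediv_nonneg hx ha.le)]

section Reciprocity

variable {h k : ℤ}

theorem not_dvd_mul_of_isCoprime (hco : IsCoprime h k) {j : ℤ} (hj : 1 ≤ j) (hjk : j < k) :
    ¬ k ∣ h * j := fun hdvd =>
  absurd (Int.le_of_dvd (by omega) (hco.symm.dvd_of_dvd_mul_left hdvd)) (not_le.mpr hjk)

noncomputable def jointMultiples (h k : ℤ) : Finset ℤ :=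
  (Icc 1 (k - 1)).image (h * ·) ∪ (Icc 1 (h - 1)).image (k * ·)

theorem jointMultiples_comm (h k : ℤ) : jointMultiples k h = jointMultiples h k :=
  union_comm _ _

theorem disjoint_image_mul_Icc (hco : IsCoprime h k) :
    Disjoint ((Icc 1 (k - 1)).image (h * ·)) ((Icc 1 (h - 1)).image (k * ·)) := by
  simp only [disjoint_left, mem_image, mem_Icc, not_exists, not_and]
  rintro _ ⟨j, ⟨hj, hjk⟩, rfl⟩ i - hij
  exact not_dvd_mul_of_isCoprime hco hj (by omega) ⟨i, hij.symm⟩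

theorem card_jointMultiples (hh : 0 < h) (hk : 0 < k) (hco : IsCoprime h k) :
    (#(jointMultiples h k) : ℤ) = h + k - 2 := by
  rw [jointMultiples, card_union_of_disjoint (disjoint_image_mul_Icc hco),
    card_image_of_injective _ (mul_right_injective₀ hh.ne'),
    card_image_of_injective _ (mul_right_injective₀ hk.ne'), Int.card_Icc, Int.card_Icc]
  omega

theorem card_filter_le_mul_jointMultiples (hh : 0 < h) (hk : 0 < k) (hco : IsCoprime h k) {j : ℤ}
    (hj : 1 ≤ j) (hjk : j ≤ k - 1) :
    (#{n ∈ jointMultiples h k | n ≤ h * j} : ℤ) = j + h * j / k := by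
  have hhj : 0 ≤ h * j := by positivity
  have hquot : h * j / k ≤ h - 1 := by
    rw [Int.le_sub_one_iff, Int.ediv_lt_iff_lt_mul hk]
    exact mul_lt_mul_of_pos_left (by omega) hh
  rw [jointMultiples, filter_union, card_union_of_disjoint
      ((disjoint_image_mul_Icc hco).mono (filter_subset _ _) (filter_subset _ _)), Nat.cast_add,
    Int.card_filter_le_image_mul_Icc hh hhj (by rwa [Int.mul_ediv_cancel_left _ hh.ne']),
    Int.card_filter_le_image_mul_Icc hk hhj hquot, Int.mul_ediv_cancel_left _ hh.ne']

noncomputable def altSum (h k : ℤ) : ℚ := ∑ j ∈ Icc 1 (k - 1), (-1 : ℚ) ^ (j + h * j / k)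

theorem altSum_eq_sum_image (hh : 0 < h) (hk : 0 < k) (hco : IsCoprime h k) :
    altSum h k =
      ∑ m ∈ (Icc 1 (k - 1)).image (h * ·), (-1 : ℚ) ^ #{n ∈ jointMultiples h k | n ≤ m} := by
  rw [altSum, sum_image fun _ _ _ _ => (mul_right_injective₀ hh.ne' ·)]
  refine sum_congr rfl fun j hj => ?_
  rw [mem_Icc] at hj
  rw [← zpow_natCast, card_filter_le_mul_jointMultiples hh hk hco hj.1 hj.2]

theorem altSum_add_altSum (hh : 0 < h) (hk : 0 < k) (hco : IsCoprime h k) (hodd : Odd (h + k)) :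
    altSum h k + altSum k h = -1 := by
  have hcard : ¬ Even #(jointMultiples h k) := by
    have := card_jointMultiples hh hk hco
    rw [Nat.not_even_iff_odd, ← Int.odd_coe_nat, this]
    exact hodd.sub_even even_two
  rw [altSum_eq_sum_image hh hk hco, altSum_eq_sum_image hk hh hco.symm, jointMultiples_comm h k,
    ← sum_union (disjoint_image_mul_Icc hco)]
  change ∑ m ∈ jointMultiples h k, _ = _
  simp only [sum_comp_card_filter_le, pow_succ, mul_neg_one, sum_neg_distrib, neg_one_geom_sum,
    hcard, if_false]

theorem B1_eq_sum_ediv (h : ℤ) (hk : 0 ≤ k) :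
    B1 h k = ∑ j ∈ Icc 1 (k - 1), (-1 : ℚ) ^ (j + h * j / k) * ((h * j / k : ℤ) : ℚ) := by
  simp only [B1, Int.floor_intCast_div_intCast _ hk]

theorem two_mul_B1 (hk : 0 < k) (hco : IsCoprime h k) (hodd : Odd (h + k)) :
    2 * B1 h k = (h - 1) * altSum h k := by
  have hreflect : B1 h k = ∑ j ∈ Icc 1 (k - 1),
      (-1 : ℚ) ^ (j + h * j / k) * ((h - 1 - h * j / k : ℤ) : ℚ) := by
    rw [B1_eq_sum_ediv h hk.le, ← Int.sum_Icc_reflect]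
    refine sum_congr rfl fun j hj => ?_
    rw [mem_Icc] at hj
    rw [show 1 + (k - 1) - j = k - j by ring,
      Int.mul_sub_ediv_of_not_dvd hk (not_dvd_mul_of_isCoprime hco hj.1 (by omega))]
    congr 1
    apply neg_one_zpow_eq_of_even_sub
    obtain ⟨m, hm⟩ := hodd
    generalize h * j / k = q
    exact ⟨m - j - q, by omega⟩
  rw [two_mul]
  nth_rewrite 2 [hreflect]
  rw [B1_eq_sum_ediv h hk.le, ← sum_add_distrib, altSum, mul_sum]
  refine sum_congr rfl fun j _ => ?_
  push_cast
  ring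

end Reciprocity

theorem stmt_3 (h k : ℤ) (hh : 0 < h) (hk : 0 < k) (hco : IsCoprime h k)
    (hodd : Odd (h + k)) :
    ((k : ℚ) - 1) * B1 h k + ((h : ℚ) - 1) * B1 k h
      = -(1 / 2) * ((k : ℚ) - 1) * ((h : ℚ) - 1) := by
  have hhk := two_mul_B1 hk hco hodd
  have hkh := two_mul_B1 hh hco.symm (add_comm h k ▸ hodd)
  have hsum := altSum_add_altSum hh hk hco hodd
  linear_combination ((k : ℚ) - 1) / 2 * hhk + ((h : ℚ) - 1) / 2 * hkh
    + ((h : ℚ) - 1) * ((k : ℚ) - 1) / 2 * hsum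
end

section
/- Let h and k be coprime positive integers with h + k odd. Then B₁(h,k) = 2·(1-h)·(s(h,k) - 2·s(h+k,2k)). -/
/-- The Dedekind sum `s(h,k) = Σ_{j=1}^{k-1} ((hj/k))·((j/k))`. -/
noncomputable def dedekindS (h k : ℤ) : ℚ :=
  ∑ j ∈ Finset.Icc (1 : ℤ) (k - 1),
    saw (((h * j : ℤ) : ℚ) / (k : ℚ)) * saw ((j : ℚ) / (k : ℚ))

/-!
Write `x_j = hj/k`, `q_j = ⌊x_j⌋` and `ε_j = (-1)^(j + q_j)`. As `h + k` is odd, the reflection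
`j ↦ k - j` fixes `ε_j` and sends `q_j` to `h - 1 - q_j`, so `2 B₁(h,k) = (h - 1) ∑ ε_j`.
Since `(x_j + j)/2 = (j + q_j)/2 + {x_j}/2`, the parity of `j + q_j` decides on which side of `1/2`
the fractional part of `(x_j + j)/2 = (h+k)j/2k` lies, and this gives
`ε_j = 2((x_j)) - 4(((h+k)j/2k))`; moreover `∑ ((x_j)) = 0`.
Finally the duplication formula `((y)) + ((y + 1/2)) = ((2y))` at `y = (h+k)j/2k` splits each term
of `s(h,k)` into two terms of `s(h+k,2k)`, and this yields
`s(h,k) - 2 s(h+k,2k) = ∑_{0<j<k} (((h+k)j/2k))`.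
-/

open Finset

lemma saw_eq_ite_fract (x : ℚ) : saw x = if Int.fract x = 0 then 0 else Int.fract x - 1 / 2 := by
  simp only [saw, ← Int.self_sub_floor, sub_eq_zero]

@[simp]
lemma saw_add_intCast (x : ℚ) (n : ℤ) : saw (x + n) = saw x := by
  simp only [saw_eq_ite_fract, Int.fract_add_intCast]

lemma saw_neg (x : ℚ) : saw (-x) = -saw x := by
  by_cases hx : Int.fract x = 0
  · simp [saw_eq_ite_fract, hx]
  · simp only [saw_eq_ite_fract, Int.fract_neg_eq_zero, hx, if_false]
    rw [Int.fract_neg hx]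
    ring

lemma saw_of_pos_of_lt_one {x : ℚ} (h0 : 0 < x) (h1 : x < 1) : saw x = x - 1 / 2 := by
  rw [saw_eq_ite_fract, Int.fract_eq_self.2 ⟨h0.le, h1⟩, if_neg h0.ne']

lemma saw_intCast_div_of_pos_of_lt {j m : ℤ} (h0 : 0 < j) (h1 : j < m) :
    saw ((j : ℚ) / m) = j / m - 1 / 2 := by
  have hm : (0 : ℚ) < m := by exact_mod_cast h0.trans h1
  exact saw_of_pos_of_lt_one (div_pos (by exact_mod_cast h0) hm)
    ((div_lt_one hm).2 (by exact_mod_cast h1))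

lemma saw_intCast (n : ℤ) : saw n = 0 := by
  simp [saw]

lemma saw_zero : saw 0 = 0 := by
  simpa using saw_intCast 0

lemma saw_half : saw (1 / 2) = 0 := by
  rw [saw_of_pos_of_lt_one (by norm_num) (by norm_num)]
  norm_num

/-- The case `n = 2` of the distribution relation `∑_{i<n} ((x + i/n)) = ((n x))`. -/
lemma saw_add_saw_add_half (x : ℚ) : saw x + saw (x + 1 / 2) = saw (2 * x) := by
  obtain ⟨n, y, hy0, hy1, rfl⟩ : ∃ (n : ℤ) (y : ℚ), 0 ≤ y ∧ y < 1 ∧ x = y + n :=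
    ⟨⌊x⌋, Int.fract x, Int.fract_nonneg x, Int.fract_lt_one x, by rw [Int.fract_add_floor]⟩
  rw [show y + n + 1 / 2 = y + 1 / 2 + n by ring, show 2 * (y + n) = 2 * y + ((2 * n : ℤ) : ℚ) by
    push_cast; ring]
  simp only [saw_add_intCast]
  rcases hy0.eq_or_lt with rfl | hy0
  · rw [zero_add, mul_zero, saw_half, saw_zero, add_zero]
  rcases lt_trichotomy y (1 / 2) with hy | rfl | hy
  · rw [saw_of_pos_of_lt_one hy0 hy1, saw_of_pos_of_lt_one (by linarith) (by linarith),
      saw_of_pos_of_lt_one (by linarith) (by linarith)]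
    ring
  · norm_num [saw_half, show saw 1 = 0 from mod_cast saw_intCast 1]
  · rw [saw_of_pos_of_lt_one hy0 hy1,
      show y + 1 / 2 = (y - 1 / 2) + ((1 : ℤ) : ℚ) by push_cast; ring,
      show 2 * y = (2 * y - 1) + ((1 : ℤ) : ℚ) by push_cast; ring, saw_add_intCast, saw_add_intCast,
      saw_of_pos_of_lt_one (by linarith) (by linarith),
      saw_of_pos_of_lt_one (by linarith) (by linarith)]
    ring

lemma floor_intCast_sub {x : ℚ} (hx : Int.fract x ≠ 0) (n : ℤ) : ⌊(n : ℚ) - x⌋ = n - 1 - ⌊x⌋ := by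
  have hpos : 0 < Int.fract x := lt_of_le_of_ne (Int.fract_nonneg x) (Ne.symm hx)
  have := Int.self_sub_floor x
  have := Int.fract_lt_one x
  rw [Int.floor_eq_iff]
  push_cast
  constructor <;> linarith

lemma neg_one_zpow_add_floor {x : ℚ} (hx : Int.fract x ≠ 0) (j : ℤ) :
    (-1 : ℚ) ^ (j + ⌊x⌋) = 2 * saw x - 4 * saw ((x + j) / 2) := by
  have hy0 : 0 < Int.fract x := lt_of_le_of_ne (Int.fract_nonneg x) (Ne.symm hx)
  have hy1 := Int.fract_lt_one x
  have hsaw : saw x = Int.fract x - 1 / 2 := by rw [saw_eq_ite_fract, if_neg hx]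
  have hxj : x + j = Int.fract x + ((j + ⌊x⌋ : ℤ) : ℚ) := by
    rw [← Int.self_sub_floor]; push_cast; ring
  obtain ⟨m, hm | hm⟩ := Int.even_or_odd' (j + ⌊x⌋)
  · rw [hsaw, hxj, hm, (even_two_mul m).neg_one_zpow,
      show (Int.fract x + ((2 * m : ℤ) : ℚ)) / 2 = Int.fract x / 2 + m by push_cast; ring,
      saw_add_intCast, saw_of_pos_of_lt_one (by positivity) (by linarith)]
    ring
  · rw [hsaw, hxj, hm, (odd_two_mul_add_one m).neg_one_zpow,
      show (Int.fract x + ((2 * m + 1 : ℤ) : ℚ)) / 2 = (Int.fract x + 1) / 2 + m by push_cast; ring,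
      saw_add_intCast, saw_of_pos_of_lt_one (by positivity) (by linarith)]
    ring

lemma neg_one_zpow_mul_floor_add_reflect {x : ℚ} (hx : Int.fract x ≠ 0) {n m : ℤ}
    (hodd : Odd (n + m)) (j : ℤ) :
    (-1 : ℚ) ^ (j + ⌊x⌋) * ⌊x⌋ + (-1 : ℚ) ^ (m - j + ⌊(n : ℚ) - x⌋) * ⌊(n : ℚ) - x⌋
      = (n - 1) * (-1 : ℚ) ^ (j + ⌊x⌋) := by
  obtain ⟨c, hc⟩ := hodd
  rw [floor_intCast_sub hx, show m - j + (n - 1 - ⌊x⌋) = j + ⌊x⌋ + 2 * (c - j - ⌊x⌋) by omega,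
    zpow_add₀ (by norm_num : (-1 : ℚ) ≠ 0) (j + ⌊x⌋), zpow_mul,
    show (-1 : ℚ) ^ (2 : ℤ) = 1 by norm_num, one_zpow]
  push_cast
  ring

lemma fract_intCast_div_ne_zero {m k : ℤ} (hk : k ≠ 0) (hdvd : ¬ k ∣ m) :
    Int.fract ((m : ℚ) / k) ≠ 0 := by
  rw [Ne, Int.fract_eq_zero_iff]
  rintro ⟨z, hz⟩
  refine hdvd ⟨z, ?_⟩
  rw [eq_div_iff (by exact_mod_cast hk)] at hz
  exact_mod_cast hz.symm.trans (mul_comm _ _)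

lemma saw_intCast_mul_sub_div (n m j : ℤ) (hm : m ≠ 0) :
    saw (((n * (m - j) : ℤ) : ℚ) / m) = -saw (((n * j : ℤ) : ℚ) / m) := by
  rw [show ((n * (m - j) : ℤ) : ℚ) / m = -(((n * j : ℤ) : ℚ) / m) + n by
    push_cast; field_simp; ring, saw_add_intCast, saw_neg]

section IntervalSums

variable {M : Type*} [AddCommMonoid M]

lemma sum_Icc_one_sub_reflect (k : ℤ) (f : ℤ → M) :
    ∑ j ∈ Icc 1 (k - 1), f (k - j) = ∑ j ∈ Icc 1 (k - 1), f j :=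
  sum_nbij' (k - ·) (k - ·) (fun j hj => by simp only [mem_Icc] at hj ⊢; omega)
    (fun j hj => by simp only [mem_Icc] at hj ⊢; omega) (by simp) (by simp) (by simp)

lemma sum_Icc_two_mul_sub_one {k : ℤ} (hk : 0 < k) (f : ℤ → M) :
    ∑ j ∈ Icc 1 (2 * k - 1), f j = ∑ j ∈ Icc 1 (k - 1), (f j + f (j + k)) + f k := by
  have hsplit : Icc 1 (2 * k - 1)
      = insert k (Icc 1 (k - 1) ∪ (Icc 1 (k - 1)).map (addRightEmbedding k)) := by
    rw [map_add_right_Icc]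
    ext j
    simp only [mem_insert, mem_union, mem_Icc]
    omega
  rw [hsplit, sum_insert (by simp), sum_union (disjoint_left.2 (by simp; omega)), sum_map,
    sum_add_distrib, add_comm]
  rfl

end IntervalSums

lemma sum_saw_intCast_mul_div_eq_zero (n k : ℤ) :
    ∑ j ∈ Icc 1 (k - 1), saw (((n * j : ℤ) : ℚ) / k) = 0 := by
  have hrefl := sum_Icc_one_sub_reflect k (fun j => saw (((n * j : ℤ) : ℚ) / k))
  rw [sum_congr rfl fun j hj => saw_intCast_mul_sub_div n k j (by simp at hj; omega),
    sum_neg_distrib] at hrefl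
  linarith

lemma two_mul_B1_s8 {h k : ℤ} (hodd : Odd (h + k))
    (hx : ∀ j ∈ Icc 1 (k - 1), Int.fract (((h * j : ℤ) : ℚ) / k) ≠ 0) :
    2 * B1 h k = (h - 1) * ∑ j ∈ Icc 1 (k - 1), (-1 : ℚ) ^ (j + ⌊((h * j : ℤ) : ℚ) / (k : ℚ)⌋) := by
  rw [two_mul]
  conv_lhs => arg 2; rw [B1, ← sum_Icc_one_sub_reflect k]
  rw [B1, ← sum_add_distrib, mul_sum]
  refine sum_congr rfl fun j hj => ?_
  have hk : (k : ℚ) ≠ 0 := by simp only [mem_Icc] at hj; exact_mod_cast (by omega : k ≠ 0)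
  rw [show ((h * (k - j) : ℤ) : ℚ) / k = h - ((h * j : ℤ) : ℚ) / k by push_cast; field_simp]
  exact neg_one_zpow_mul_floor_add_reflect (hx j hj) hodd j

lemma sum_neg_one_zpow_add_floor {h k : ℤ}
    (hx : ∀ j ∈ Icc 1 (k - 1), Int.fract (((h * j : ℤ) : ℚ) / k) ≠ 0) :
    ∑ j ∈ Icc 1 (k - 1), (-1 : ℚ) ^ (j + ⌊((h * j : ℤ) : ℚ) / (k : ℚ)⌋)
      = -4 * ∑ j ∈ Icc 1 (k - 1), saw ((((h + k) * j : ℤ) : ℚ) / ((2 * k : ℤ) : ℚ)) := by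
  rw [sum_congr (s₁ := Icc 1 (k - 1)) rfl fun j hj => neg_one_zpow_add_floor (hx j hj) j,
    sum_sub_distrib, ← mul_sum, ← mul_sum, sum_saw_intCast_mul_div_eq_zero, mul_zero, zero_sub,
    neg_mul]
  refine congrArg (fun s => -(4 * s)) (sum_congr rfl fun j hj => ?_)
  have hk : (k : ℚ) ≠ 0 := by simp only [mem_Icc] at hj; exact_mod_cast (by omega : k ≠ 0)
  congr 1
  push_cast
  field_simp

lemma saw_intCast_mul_div_eq_saw_add_saw {h k : ℤ} (hodd : Odd (h + k)) (hk : (k : ℚ) ≠ 0)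
    (j : ℤ) :
    saw (((h * j : ℤ) : ℚ) / k)
      = saw ((((h + k) * j : ℤ) : ℚ) / ((2 * k : ℤ) : ℚ))
        + saw ((((h + k) * (j + k) : ℤ) : ℚ) / ((2 * k : ℤ) : ℚ)) := by
  obtain ⟨c, hc⟩ := hodd
  have hcQ : (h : ℚ) + k = 2 * c + 1 := by exact_mod_cast hc
  rw [show ((((h + k) * (j + k) : ℤ) : ℚ) / ((2 * k : ℤ) : ℚ))
      = (((h + k) * j : ℤ) : ℚ) / ((2 * k : ℤ) : ℚ) + 1 / 2 + c by
    push_cast; field_simp; linear_combination (k : ℚ) * hcQ,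
    saw_add_intCast, saw_add_saw_add_half,
    show 2 * ((((h + k) * j : ℤ) : ℚ) / ((2 * k : ℤ) : ℚ)) = ((h * j : ℤ) : ℚ) / k + j by
      push_cast; field_simp,
    saw_add_intCast]

lemma dedekindS_sub_two_mul_dedekindS {h k : ℤ} (hk : 0 < k) (hodd : Odd (h + k)) :
    dedekindS h k - 2 * dedekindS (h + k) (2 * k)
      = ∑ j ∈ Icc 1 (k - 1), saw ((((h + k) * j : ℤ) : ℚ) / ((2 * k : ℤ) : ℚ)) := by
  have hkQ : (k : ℚ) ≠ 0 := by exact_mod_cast hk.ne'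
  have hrefl : ∑ j ∈ Icc 1 (k - 1), saw ((((h + k) * (j + k) : ℤ) : ℚ) / ((2 * k : ℤ) : ℚ))
      = -∑ j ∈ Icc 1 (k - 1), saw ((((h + k) * j : ℤ) : ℚ) / ((2 * k : ℤ) : ℚ)) := by
    rw [← sum_Icc_one_sub_reflect k, ← sum_neg_distrib]
    refine sum_congr rfl fun j _ => ?_
    rw [show k - j + k = 2 * k - j by ring]
    exact saw_intCast_mul_sub_div _ _ _ (by omega)
  have hterm : ∀ j ∈ Icc 1 (k - 1), saw (((h * j : ℤ) : ℚ) / k) * saw ((j : ℚ) / k)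
      - 2 * (saw ((((h + k) * j : ℤ) : ℚ) / ((2 * k : ℤ) : ℚ)) * saw ((j : ℚ) / ((2 * k : ℤ) : ℚ))
        + saw ((((h + k) * (j + k) : ℤ) : ℚ) / ((2 * k : ℤ) : ℚ))
          * saw (((j + k : ℤ) : ℚ) / ((2 * k : ℤ) : ℚ)))
      = (saw ((((h + k) * j : ℤ) : ℚ) / ((2 * k : ℤ) : ℚ))
        - saw ((((h + k) * (j + k) : ℤ) : ℚ) / ((2 * k : ℤ) : ℚ))) / 2 := by
    intro j hj
    rw [mem_Icc] at hj
    rw [saw_intCast_mul_div_eq_saw_add_saw hodd hkQ,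
      saw_intCast_div_of_pos_of_lt (j := j) (m := k) (by omega) (by omega),
      saw_intCast_div_of_pos_of_lt (j := j) (m := 2 * k) (by omega) (by omega),
      saw_intCast_div_of_pos_of_lt (j := j + k) (m := 2 * k) (by omega) (by omega)]
    push_cast
    field_simp
    ring
  rw [dedekindS, dedekindS, sum_Icc_two_mul_sub_one hk,
    show ((k : ℤ) : ℚ) / ((2 * k : ℤ) : ℚ) = 1 / 2 by push_cast; field_simp, saw_half, mul_zero,
    add_zero, mul_sum, ← sum_sub_distrib, sum_congr rfl hterm, ← sum_div, sum_sub_distrib, hrefl]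
  ring

theorem stmt_8_general (h k : ℤ) (hk : 0 < k) (hco : IsCoprime h k)
    (hodd : Odd (h + k)) :
    B1 h k = 2 * (1 - (h : ℚ)) * (dedekindS h k - 2 * dedekindS (h + k) (2 * k)) := by
  have hx : ∀ j ∈ Icc 1 (k - 1), Int.fract (((h * j : ℤ) : ℚ) / k) ≠ 0 := by
    intro j hj hfract
    rw [mem_Icc] at hj
    refine fract_intCast_div_ne_zero hk.ne' (fun hdvd => ?_) hfract
    have := Int.le_of_dvd (by omega) (hco.symm.dvd_of_dvd_mul_left hdvd)
    omega
  have hB1 := two_mul_B1_s8 hodd hx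
  rw [sum_neg_one_zpow_add_floor hx, ← dedekindS_sub_two_mul_dedekindS hk hodd] at hB1
  linear_combination hB1 / 2

theorem stmt_8 (h k : ℤ) (hh : 0 < h) (hk : 0 < k) (hco : IsCoprime h k)
    (hodd : Odd (h + k)) :
    B1 h k = 2 * (1 - (h : ℚ)) * (dedekindS h k - 2 * dedekindS (h + k) (2 * k)) :=
  stmt_8_general h k hk hco hodd
end
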